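/- Let (Π, Γ) : ℝ → ℝ³ × ℝ³ satisfy the heavy top equations Π' = Π × Ω + mgh Γ × χ and Γ' = Γ × Ω, and suppose Γ(t) = λ Ω(t) for a constant λ. Then N := Π + Γ satisfies N' = N × Ω + p × Ω with p = -mghλχ. -/

import Mathlib

open Matrix

theorem smul_cross_eq_neg_smul_cross {R : Type*} [CommRing R] (a : R) (u v : Fin 3 → R) :
    (a • u) ⨯₃ v = (-a • v) ⨯₃ u := by
  rw [LinearMap.map_smul₂, LinearMap.map_smul₂, ← cross_anticomm v u, smul_neg, neg_smul]

theorem smul_cross_self {R : Type*} [CommRing R] (a : R) (u : Fin 3 → R) :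
    (a • u) ⨯₃ u = 0 := by
  rw [LinearMap.map_smul₂, cross_self, smul_zero]

/-- Heavy top / rigid body with rotors matching: if `(Π, Γ)` satisfies the heavy top
equations `Π' = Π × Ω + mgh Γ × χ`, `Γ' = Γ × Ω`, and `Γ = λΩ` for a constant `λ`,
then `N := Π + Γ` satisfies `N' = N × Ω + p × Ω` with `p = -mghλχ`. -/
theorem heavy_top_rotor_matching
    (m g h lam : ℝ) (χ : Fin 3 → ℝ) (Ω P Γ : ℝ → Fin 3 → ℝ)
    (hP : ∀ t, HasDerivAt P
      (crossProduct (P t) (Ω t) + (m * g * h) • crossProduct (Γ t) χ) t)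
    (hΓ : ∀ t, HasDerivAt Γ (crossProduct (Γ t) (Ω t)) t)
    (hlam : ∀ t, Γ t = lam • Ω t) :
    ∀ t, HasDerivAt (fun s => P s + Γ s)
      (crossProduct (P t + Γ t) (Ω t)
        + crossProduct (-(m * g * h * lam) • χ) (Ω t)) t := by
  intro t
  have hΓΩ : Γ t ⨯₃ Ω t = 0 := by rw [hlam t, smul_cross_self]
  have hpotential : (m * g * h) • (Γ t ⨯₃ χ) = (-(m * g * h * lam) • χ) ⨯₃ Ω t := by
    rw [hlam t, ← LinearMap.map_smul₂, smul_smul, smul_cross_eq_neg_smul_cross]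
  refine ((hP t).add (hΓ t)).congr_deriv ?_
  rw [map_add, LinearMap.add_apply, hΓΩ, hpotential, add_zero, add_zero]
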